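/- arXiv:2206.06591 — 2 statements merged into one kernel-verified Lean document; each statement's English description precedes it below -/
import Mathlib

section
/- For integers N ≥ 1, l ≥ 1, and indeterminates x, y, the polynomial e(x,y) := ∏_{r=0}^{N} (r·x + (N−r)·y) satisfies e(x,y) = N·x · ∑_{i=0}^{N} a_i^{(l)} · (l·x − (l−1)·y)^i · (y−x)^{N−i}, where a_i^{(l)} is the coefficient of ε^i in the polynomial ∏_{r=1}^{N} (N(l−1) + r + N·ε). -/
/-! The factor `r = N` of `e` is `N x`. In the variables `u = l x − (l−1) y`, `v = y − x`, the
factor `r = N − k` (`1 ≤ k ≤ N`) is the linear form `(N(l−1) + k) v + N u`, so the product of the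
remaining factors is the degree-`N` homogenization of `∏_k (N(l−1) + k + N ε)` evaluated at `(u, v)`.
-/

open Finset

namespace Polynomial

variable {R A : Type*} [CommSemiring R] [CommSemiring A] [Algebra R A]

theorem aeval_homogenize (p : R[X]) (n : ℕ) (g : Fin 2 → A) :
    MvPolynomial.aeval g (p.homogenize n)
      = ∑ i ∈ range (n + 1), p.coeff i • (g 0 ^ i * g 1 ^ (n - i)) := by
  simp only [homogenize, map_sum, MvPolynomial.aeval_monomial,
    Finset.Nat.sum_antidiagonal_eq_sum_range_succ_mk]
  refine Finset.sum_congr rfl fun i _ => ?_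
  rw [Finsupp.update_eq_add_single (by simp), Finsupp.prod_add_index' (by simp) (by simp [pow_add]),
    Finsupp.prod_single_index (by simp), Finsupp.prod_single_index (by simp), Algebra.smul_def]

theorem prod_smul_add_smul_eq_sum_coeff {ι : Type*} (s : Finset ι) (c d : ι → R) (u v : A) :
    ∏ r ∈ s, (c r • v + d r • u)
      = ∑ i ∈ range (#s + 1), (∏ r ∈ s, (C (c r) + d r • X)).coeff i • (u ^ i * v ^ (#s - i)) := by
  have hdeg : ∀ r ∈ s, (C (c r) + d r • X).natDegree ≤ 1 := fun r _ =>
    (natDegree_add_le _ _).trans (max_le (by simp) ((natDegree_smul_le _ _).trans natDegree_X_le))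
  have h := aeval_homogenize (∏ r ∈ s, (C (c r) + d r • X)) #s ![u, v]
  simp only [Matrix.cons_val_zero, Matrix.cons_val_one] at h
  rw [← h, card_eq_sum_ones, homogenize_finsetProd hdeg, map_prod]
  refine Finset.prod_congr rfl fun r _ => ?_
  simp only [homogenize_add, homogenize_C, homogenize_smul, homogenize_X one_ne_zero, map_add,
    map_mul, map_smul, MvPolynomial.aeval_C, MvPolynomial.aeval_X, Matrix.cons_val_zero,
    Matrix.cons_val_one, pow_one, Nat.sub_self, pow_zero, mul_one]
  rw [Algebra.smul_def]

end Polynomial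

theorem smul_add_smul_eq_smul_sub_add_smul {M : Type*} [AddCommGroup M] [Module ℚ M]
    {N l r : ℕ} (hr : r < N) (hl : 1 ≤ l) (x y : M) :
    ((N - 1 - r : ℕ) : ℚ) • x + ((N - (N - 1 - r) : ℕ) : ℚ) • y
      = ((N * (l - 1) + (r + 1) : ℕ) : ℚ) • (y - x)
        + (N : ℚ) • ((l : ℚ) • x - ((l - 1 : ℕ) : ℚ) • y) := by
  obtain ⟨k, rfl⟩ := Nat.exists_eq_add_of_le hl
  obtain ⟨m, rfl⟩ := Nat.exists_eq_add_of_lt hr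
  rw [show r + m + 1 - 1 - r = m by omega, show r + m + 1 - m = r + 1 by omega,
    show 1 + k - 1 = k by omega]
  push_cast
  module

open Polynomial

theorem stmt0_general (N l : ℕ) (hl : 1 ≤ l)
    (a : ℕ → ℚ)
    (ha : ∀ i, a i = (∏ r ∈ Finset.range N,
        (Polynomial.C ((N * (l - 1) + (r + 1) : ℕ) : ℚ) + (N : ℚ) • Polynomial.X)).coeff i)
    (R : Type*) [CommRing R] [Algebra ℚ R] (x y : R) :
    ∏ r ∈ Finset.range (N + 1), ((r : ℚ) • x + ((N - r : ℕ) : ℚ) • y)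
      = (N : ℚ) • x * ∑ i ∈ Finset.range (N + 1),
          (a i) • (((l : ℚ) • x - ((l - 1 : ℕ) : ℚ) • y) ^ i * (y - x) ^ (N - i)) := by
  have hfactors : ∏ r ∈ range N, ((r : ℚ) • x + ((N - r : ℕ) : ℚ) • y)
      = ∏ r ∈ range N, (((N * (l - 1) + (r + 1) : ℕ) : ℚ) • (y - x)
          + (N : ℚ) • ((l : ℚ) • x - ((l - 1 : ℕ) : ℚ) • y)) := by
    rw [← prod_range_reflect]
    exact prod_congr rfl fun r hr => smul_add_smul_eq_smul_sub_add_smul (mem_range.mp hr) hl x y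
  rw [prod_range_succ, hfactors, prod_smul_add_smul_eq_sum_coeff, card_range, Nat.sub_self,
    Nat.cast_zero, zero_smul, add_zero, mul_comm]
  simp only [ha]

/-- For integers `N ≥ 1`, `l ≥ 1`, the polynomial
`e(x,y) = ∏_{r=0}^{N} (r x + (N−r) y)` satisfies
`e(x,y) = N x ∑_{i=0}^{N} a_i^{(l)} (l x − (l−1) y)^i (y−x)^{N−i}`,
where `a_i^{(l)}` is the coefficient of `ε^i` in `∏_{r=1}^{N} (N(l−1)+r+Nε)`.
Stated for indeterminates `x, y` in an arbitrary commutative ℚ-algebra. -/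
theorem stmt0 (N l : ℕ) (hN : 1 ≤ N) (hl : 1 ≤ l)
    (a : ℕ → ℚ)
    (ha : ∀ i, a i = (∏ r ∈ Finset.range N,
        (Polynomial.C ((N * (l - 1) + (r + 1) : ℕ) : ℚ) + (N : ℚ) • Polynomial.X)).coeff i)
    (R : Type*) [CommRing R] [Algebra ℚ R] (x y : R) :
    ∏ r ∈ Finset.range (N + 1), ((r : ℚ) • x + ((N - r : ℕ) : ℚ) • y)
      = (N : ℚ) • x * ∑ i ∈ Finset.range (N + 1),
          (a i) • (((l : ℚ) • x - ((l - 1 : ℕ) : ℚ) • y) ^ i * (y - x) ^ (N - i)) :=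
  stmt0_general N l hl a ha R x y
end

section
/- Let N ≥ 2, d ≥ 1, α ≥ 0 be integers and z_d a nonzero complex variable. Then the residue at z_{d−1} = ((d−1)/d)·z_d of the function z_{d−1} ↦ [(z_d − z_{d−1})^α / (z_{d−1} − ((d−1)/d) z_d)^{α+1}] · e(z_{d−1}, z_d)/(N z_{d−1}) equals (z_d)^N · d^α · ∑_{l=0}^{α} A_l^{(d)} · (−d)^{−α+l}, where e(x,y) = ∏_{r=0}^{N}(r x + (N−r) y) and A_l^{(d)} = ∑_{i=0}^{l} a_i^{(d)} C(N+l−i−1, l−i) (−1)^{l−i} d^{−(N+l−i)}, with a_i^{(d)} the coefficient of ε^i in ∏_{r=1}^{N}(N(d−1)+r+Nε). -/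
/-!
Put `b = z_d / d`, so that the pole is `c = (d - 1) b`, and `P(Y) = ∏_{r<N} (N d - r Y)`.
Substituting `z = c + b X` turns the holomorphic factor into `b^(α+N) (1 - X)^α P(1 - X)`,
so the residue is `b^N [X^α] (1 - X)^α P(1 - X)`.
On the other side, `A_k` is the `k`-th coefficient of `∏_{r=1}^N (N(d-1) + r + N ε) · (d + ε)^(-N)`;
substituting `ε = -d X` turns this into `d^(-N) (1 - X)^N P((1 - X)⁻¹) · (1 - X)^(-N)`, and
summing coefficients up to `α` is multiplying by `(1 - X)⁻¹`. Hence
`d^N ∑_{k ≤ α} A_k (-d)^k = [X^α] (1 - X)⁻¹ P((1 - X)⁻¹)`.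
Both coefficient extractions are linear in `P`, and for `P = Y^j` they are
`(-1)^α binom(α + j, α)` and `binom(α + j, α)`.
-/

open Polynomial Finset

theorem Polynomial.iteratedDeriv_eval {𝕜 : Type*} [NontriviallyNormedField 𝕜] (p : 𝕜[X])
    (n : ℕ) : iteratedDeriv n (fun x => p.eval x) = fun x => (derivative^[n] p).eval x := by
  induction n with
  | zero => simp
  | succ n ih =>
    ext x
    rw [iteratedDeriv_succ, ih, Function.iterate_succ_apply', Polynomial.deriv]

theorem Polynomial.taylor_coeff_eq_iteratedDeriv_div_factorial {𝕜 : Type*}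
    [NontriviallyNormedField 𝕜] [CharZero 𝕜] (p : 𝕜[X]) (c : 𝕜) (n : ℕ) :
    (taylor c p).coeff n = iteratedDeriv n (fun x => p.eval x) c / n.factorial := by
  simp only [iteratedDeriv_eval, taylor_coeff, ← factorial_smul_hasseDeriv, LinearMap.smul_apply,
    eval_smul]
  rw [nsmul_eq_mul, mul_div_cancel_left₀ _ (Nat.cast_ne_zero.mpr n.factorial_ne_zero)]

theorem PowerSeries.coeff_mul_mk_one {R : Type*} [CommSemiring R] (φ : PowerSeries R) (n : ℕ) :
    coeff n (φ * mk 1) = ∑ k ∈ range (n + 1), coeff k φ := by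
  simp [coeff_mul, Finset.Nat.sum_antidiagonal_eq_sum_range_succ_mk]

theorem Polynomial.coeff_one_sub_X_pow {R : Type*} [CommRing R] (m n : ℕ) :
    ((1 - X : R[X]) ^ m).coeff n = (-1) ^ n * m.choose n := by
  have : (1 - X : R[X]) ^ m = ((1 + X) ^ m).comp (C (-1) * X) := by simp [sub_eq_add_neg]
  rw [this, comp_C_mul_X_coeff, coeff_one_add_X_pow, mul_comm]

theorem Polynomial.coeff_one_sub_X_pow_mul_comp_one_sub_X {R : Type*} [CommRing R] (H : R[X])
    (n : ℕ) :
    ((1 - X) ^ n * H.comp (1 - X)).coeff n =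
      (-1) ^ n * PowerSeries.coeff n
        (PowerSeries.mk (1 : ℕ → R) * aeval (PowerSeries.mk (1 : ℕ → R)) H) := by
  induction H using Polynomial.induction_on' with
  | add p q hp hq => simp [mul_add, hp, hq]
  | monomial j c =>
    have hpow : PowerSeries.mk (1 : ℕ → R) * PowerSeries.mk 1 ^ j =
        PowerSeries.mk fun m => ((j + m).choose j : R) := by
      rw [← pow_succ', PowerSeries.mk_one_pow_eq_mk_choose_add]
    rw [monomial_comp, aeval_monomial, mul_left_comm, ← pow_add, coeff_C_mul, coeff_one_sub_X_pow,
      ← Algebra.smul_def, mul_smul_comm, hpow, PowerSeries.coeff_smul, PowerSeries.coeff_mk,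
      Nat.choose_symm_add, add_comm j, smul_eq_mul, mul_left_comm]

noncomputable def coeffA (N d : ℕ) (a : ℕ → ℂ) (k : ℕ) : ℂ :=
  ∑ i ∈ range (k + 1), a i * ((N + k - i - 1).choose (k - i) : ℂ) * (-1 : ℂ) ^ (k - i)
    / (d : ℂ) ^ (N + k - i)

theorem pow_mul_coeffA_mul_neg_pow {N d : ℕ} (hN : 0 < N) (hd : (d : ℂ) ≠ 0) (f : ℂ[X])
    (k : ℕ) :
    (d : ℂ) ^ N * (coeffA N d f.coeff k * (-d) ^ k) =
      PowerSeries.coeff k ((f.comp (C (-d : ℂ) * X) : PowerSeries ℂ) * PowerSeries.mk 1 ^ N) := by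
  obtain ⟨M, rfl⟩ : ∃ M, N = M + 1 := ⟨N - 1, by omega⟩
  rw [PowerSeries.mk_one_pow_eq_mk_choose_add, PowerSeries.coeff_mul,
    Finset.Nat.sum_antidiagonal_eq_sum_range_succ fun i j =>
      PowerSeries.coeff i _ * PowerSeries.coeff j _,
    coeffA, sum_mul, mul_sum]
  refine sum_congr rfl fun i hi => ?_
  obtain ⟨m, rfl⟩ : ∃ m, k = i + m := ⟨k - i, by simp at hi; omega⟩
  rw [Polynomial.coeff_coe, comp_C_mul_X_coeff, PowerSeries.coeff_mk, Nat.add_sub_cancel_left,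
    show M + 1 + (i + m) - i - 1 = M + m by omega, show M + 1 + (i + m) - i = M + 1 + m by omega,
    Nat.choose_symm_add]
  have hsign : (-1 : ℂ) ^ m * (-d) ^ m = d ^ m := by rw [← mul_pow]; simp
  field_simp
  rw [pow_add (-(d : ℂ)), pow_add (d : ℂ), pow_add (d : ℂ), ← hsign]
  ring

noncomputable def polyA (N d : ℕ) : ℂ[X] :=
  ∏ r ∈ range N, (C ((N * (d - 1) + (r + 1) : ℕ) : ℂ) + (N : ℂ) • X)

/-- Both sides of the formula are coefficients of this polynomial, evaluated at `Y = 1 - X` and at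
`Y = (1 - X)⁻¹` respectively. -/
noncomputable def poleProduct (N d : ℕ) : ℂ[X] :=
  ∏ r ∈ range N, (C ((N : ℂ) * d) - C (r : ℂ) * X)

theorem polyA_comp {N d : ℕ} (hd : 1 ≤ d) :
    (polyA N d).comp (C (-d : ℂ) * X) =
      ∏ r ∈ range N, (C ((N : ℂ) * d - r) - C ((N : ℂ) * d) * X) := by
  rw [polyA, Polynomial.prod_comp, ← prod_range_reflect]
  refine prod_congr rfl fun r hr => ?_
  have hcast : ((N * (d - 1) + (N - 1 - r + 1) : ℕ) : ℂ) = N * d - r := by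
    have : r < N := mem_range.mp hr
    rw [Nat.cast_add, Nat.cast_mul, Nat.cast_sub hd, Nat.cast_add, Nat.cast_sub (by omega),
      Nat.cast_sub (by omega)]
    push_cast
    ring
  simp only [hcast, add_comp, C_comp, mul_comp, X_comp, smul_eq_C_mul, map_mul, map_neg]
  ring

theorem coe_polyA_comp {N d : ℕ} (hd : 1 ≤ d) :
    (((polyA N d).comp (C (-d : ℂ) * X) : ℂ[X]) : PowerSeries ℂ) =
      (1 - PowerSeries.X) ^ N * aeval (PowerSeries.mk 1) (poleProduct N d) := by
  have hinv := PowerSeries.mk_one_mul_one_sub_eq_one ℂ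
  rw [polyA_comp hd, ← Polynomial.coeToPowerSeries.ringHom_apply, map_prod, poleProduct, map_prod,
    show (1 - PowerSeries.X : PowerSeries ℂ) ^ N = ∏ _r ∈ range N, (1 - PowerSeries.X) by simp,
    ← prod_mul_distrib]
  refine prod_congr rfl fun r _ => ?_
  simp only [coeToPowerSeries.ringHom_apply, Polynomial.coe_C, Polynomial.coe_X, map_sub, map_mul,
    aeval_C, aeval_X, PowerSeries.algebraMap_apply, Algebra.algebraMap_self, RingHom.id_apply]
  linear_combination PowerSeries.C (r : ℂ) * hinv

theorem pow_mul_sum_coeffA {N d : ℕ} (hN : 0 < N) (hd : 1 ≤ d) (α : ℕ) :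
    (d : ℂ) ^ N * ∑ k ∈ range (α + 1), coeffA N d (polyA N d).coeff k * (-d) ^ k =
      PowerSeries.coeff α (PowerSeries.mk 1 * aeval (PowerSeries.mk 1) (poleProduct N d)) := by
  have hd' : (d : ℂ) ≠ 0 := by exact_mod_cast (by omega : d ≠ 0)
  have hinv := PowerSeries.mk_one_mul_one_sub_eq_one ℂ
  rw [mul_sum, sum_congr rfl fun k _ => pow_mul_coeffA_mul_neg_pow hN hd' _ k,
    ← PowerSeries.coeff_mul_mk_one, coe_polyA_comp hd]
  congr 1
  set F : PowerSeries ℂ := aeval (PowerSeries.mk 1) (poleProduct N d)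
  calc ((1 : PowerSeries ℂ) - PowerSeries.X) ^ N * F * PowerSeries.mk 1 ^ N * PowerSeries.mk 1
      = (PowerSeries.mk 1 * (1 - PowerSeries.X)) ^ N * (PowerSeries.mk 1 * F) := by
        rw [mul_pow]; ring
    _ = PowerSeries.mk 1 * F := by rw [hinv, one_pow, one_mul]

theorem taylor_coeff_eq_pow_mul_coeff_poleProduct_comp {N d : ℕ} (hd : (d : ℂ) ≠ 0) {zd : ℂ}
    (hzd : zd ≠ 0) (α : ℕ) :
    (taylor (((d : ℂ) - 1) / d * zd)
      ((C zd - X) ^ α * ∏ r ∈ range N, (C (r : ℂ) * X + C ((N - r : ℕ) : ℂ) * C zd))).coeff α =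
      (zd / d) ^ N * ((1 - X) ^ α * (poleProduct N d).comp (1 - X)).coeff α := by
  obtain ⟨b, rfl⟩ : ∃ b, zd = d * b := ⟨zd / d, by field_simp⟩
  have hb : b ≠ 0 := right_ne_zero_of_mul hzd
  rw [show ((d : ℂ) - 1) / d * (d * b) = (d - 1) * b by field_simp, mul_div_cancel_left₀ b hd]
  have hscale : (taylor (((d : ℂ) - 1) * b) ((C (d * b) - X) ^ α *
        ∏ r ∈ range N, (C (r : ℂ) * X + C ((N - r : ℕ) : ℂ) * C (d * b)))).comp (C b * X) =
      C (b ^ (α + N)) * ((1 - X) ^ α * (poleProduct N d).comp (1 - X)) := by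
    rw [taylor_apply, comp_assoc, poleProduct, Polynomial.prod_comp]
    simp only [add_comp, X_comp, C_comp, mul_comp, pow_comp, sub_comp, Polynomial.prod_comp]
    have hfactor : ∀ r ∈ range N,
        C (r : ℂ) * (C b * X + C ((d - 1) * b)) + C ((N - r : ℕ) : ℂ) * C (d * b) =
          C b * (C ((N : ℂ) * d) - C (r : ℂ) * (1 - X)) := by
      intro r hr
      rw [Nat.cast_sub (mem_range.mp hr).le]
      simp only [map_mul, map_sub, map_natCast, map_one]
      ring
    have hlin : C ((d : ℂ) * b) - (C b * X + C ((d - 1) * b)) = C b * (1 - X) := by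
      simp only [map_mul, map_sub, map_natCast, map_one]
      ring
    rw [hlin, mul_pow, prod_congr rfl hfactor, prod_mul_distrib, prod_const, card_range, map_pow,
      pow_add]
    ring
  have := congrArg (coeff · α) hscale
  simp only [comp_C_mul_X_coeff, coeff_C_mul] at this
  rw [pow_add] at this
  exact mul_right_cancel₀ (pow_ne_zero α hb) (by linear_combination this)

/-- Lemma 4 of the paper: the residue at `z = ((d−1)/d) z_d` of
`z ↦ (z_d−z)^α/(z−((d−1)/d)z_d)^{α+1} · e(z,z_d)/(N z)`, computed as `(1/α!)`
times the `α`-th derivative at the pole of the holomorphic factor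
`z ↦ (z_d−z)^α · e(z,z_d)/(N z)` — note
`e(z,z_d)/(N z) = ∏_{r=0}^{N−1}(r z + (N−r) z_d)` since the `r = N` factor of
`e` is `N z` — equals `z_d^N · d^α · ∑_{l=0}^{α} A_l^{(d)} (−d)^{−α+l}`. -/
theorem stmt12 (N d α : ℕ) (hN : 2 ≤ N) (hd : 1 ≤ d)
    (zd : ℂ) (hzd : zd ≠ 0)
    (a : ℕ → ℂ)
    (ha : ∀ i, a i = (∏ r ∈ Finset.range N,
        (Polynomial.C ((N * (d - 1) + (r + 1) : ℕ) : ℂ) + (N : ℂ) • Polynomial.X)).coeff i)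
    (A : ℕ → ℂ)
    (hA : ∀ k, A k = ∑ i ∈ Finset.range (k + 1),
        a i * ((N + k - i - 1).choose (k - i) : ℂ) * (-1 : ℂ) ^ (k - i)
          / (d : ℂ) ^ (N + k - i)) :
    (1 / (α.factorial : ℂ)) *
      iteratedDeriv α (fun z : ℂ =>
        (zd - z) ^ α * ∏ r ∈ Finset.range N, ((r : ℂ) * z + ((N - r : ℕ) : ℂ) * zd))
        ((((d : ℂ) - 1) / (d : ℂ)) * zd)
      = zd ^ N * (d : ℂ) ^ α * ∑ k ∈ Finset.range (α + 1), A k * (-(d : ℂ)) ^ (k : ℤ) / (-(d : ℂ)) ^ (α : ℤ) := by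
  have hd' : (d : ℂ) ≠ 0 := by exact_mod_cast (by omega : d ≠ 0)
  obtain rfl : a = (polyA N d).coeff := funext ha
  obtain rfl : A = coeffA N d (polyA N d).coeff := funext hA
  have hpoly : (fun z : ℂ => (zd - z) ^ α * ∏ r ∈ range N, ((r : ℂ) * z + ((N - r : ℕ) : ℂ) * zd)) =
      fun z => ((C zd - X) ^ α *
        ∏ r ∈ range N, (C (r : ℂ) * X + C ((N - r : ℕ) : ℂ) * C zd)).eval z := by
    simp [eval_prod]
  rw [hpoly, one_div_mul_eq_div, ← taylor_coeff_eq_iteratedDeriv_div_factorial,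
    taylor_coeff_eq_pow_mul_coeff_poleProduct_comp hd' hzd, coeff_one_sub_X_pow_mul_comp_one_sub_X,
    ← pow_mul_sum_coeffA (by omega) hd]
  simp only [zpow_natCast]
  rw [← sum_div]
  have hsign : (-1 : ℂ) ^ α * (-1) ^ α = 1 := by rw [← mul_pow]; simp
  rw [neg_pow (d : ℂ) α, div_pow]
  field_simp
  linear_combination (∑ k ∈ range (α + 1), coeffA N d (polyA N d).coeff k * (-d) ^ k) * hsign
end
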